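/- arXiv:2503.08615 — 4 statements merged into one kernel-verified Lean document; each statement's English description precedes it below -/
import Mathlib

section
/- Let H be a monoid. An element X of 𝒫fin,1(H) is irreducible in 𝒫fin,1(H) but not an atom of 𝒫fin,1(H) if and only if X = {1_H, x} for some x ∈ H with x ≠ 1_H such that x² = 1_H or x² = x. -/
open scoped Pointwise

section Defs

variable {M : Type*} [Monoid M]

/-- `x` divides `y` (two-sidedly) in a monoid: `y = u * x * v` for some `u v`. -/
def dvdTS (x y : M) : Prop := ∃ u v : M, y = u * x * v

/-- A non-unit-divisor: an element that does not divide `1`. -/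
def isNonUnitDivisor (x : M) : Prop := ¬ dvdTS x 1

/-- `x` properly divides `y`: `x` divides `y` but `y` does not divide `x`. -/
def properDvdTS (x y : M) : Prop := dvdTS x y ∧ ¬ dvdTS y x

/-- An irreducible: a non-unit-divisor `a` with `a ≠ x * y` whenever `x, y` are
non-unit-divisors properly dividing `a`. -/
def isIrred (a : M) : Prop :=
  isNonUnitDivisor a ∧
    ∀ x y : M, isNonUnitDivisor x → isNonUnitDivisor y →
      properDvdTS x a → properDvdTS y a → a ≠ x * y

/-- An atom: a non-unit-divisor that is not a product of two non-unit-divisors. -/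
def isAtomTS (a : M) : Prop :=
  isNonUnitDivisor a ∧ ∀ x y : M, isNonUnitDivisor x → isNonUnitDivisor y → a ≠ x * y

/-- A quark: a non-unit-divisor not properly divided by any non-unit-divisor. -/
def isQuarkTS (a : M) : Prop :=
  isNonUnitDivisor a ∧ ∀ x : M, isNonUnitDivisor x → ¬ properDvdTS x a

/-- A factorization of `x` into irreducibles, recorded as a list. -/
def IsFactorization (l : List M) (x : M) : Prop :=
  (∀ a ∈ l, isIrred a) ∧ l.prod = x

/-- A minimal factorization: a factorization of `x` such that no product, in any order,
of a proper sub-multiset of its factors equals `x`. -/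
def IsMinimalFactorization (l : List M) (x : M) : Prop :=
  IsFactorization l x ∧
    ∀ l' : List M, (↑l' : Multiset M) < (↑l : Multiset M) → l'.prod ≠ x

end Defs

/-- A unique minimal factorization (UmF) monoid: every non-identity element has a minimal
factorization into irreducibles, unique up to permutation of the factors. -/
def IsUmF (M : Type*) [Monoid M] : Prop :=
  (∀ x : M, x ≠ 1 → ∃ l : List M, IsMinimalFactorization l x) ∧
    ∀ x : M, ∀ l l' : List M,
      IsMinimalFactorization l x → IsMinimalFactorization l' x → l.Perm l'

/-- The reduced finitary power monoid `𝒫fin,1(H)` of a monoid `H`: the submonoid of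
`Finset H` (under pointwise multiplication) of finite subsets containing `1`. -/
def redPow (H : Type*) [Monoid H] [DecidableEq H] : Submonoid (Finset H) where
  carrier := {X : Finset H | (1 : H) ∈ X}
  one_mem' := by simp
  mul_mem' := by
    intro X Y hX hY
    simpa using Finset.mul_mem_mul hX hY

section Aux

variable {H : Type*} [Monoid H] [DecidableEq H]

lemma redPow.one_mem' (A : redPow H) : (1 : H) ∈ (A : Finset H) := A.2

lemma redPow.coe_mul' (A B : redPow H) :
    ((A * B : redPow H) : Finset H) = (A : Finset H) * (B : Finset H) := rfl

lemma dvdTS_subset {A B : redPow H} (h : dvdTS A B) : (A : Finset H) ⊆ (B : Finset H) := by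
  obtain ⟨U, V, h⟩ := h
  intro a ha
  have h' : (B : Finset H) = (U : Finset H) * A * V := congrArg Subtype.val h
  rw [h']
  have : (1 : H) * a * 1 ∈ (U : Finset H) * A * V :=
    Finset.mul_mem_mul (Finset.mul_mem_mul (redPow.one_mem' U) ha) (redPow.one_mem' V)
  simpa using this

lemma nonUnit_iff {A : redPow H} : isNonUnitDivisor A ↔ (A : Finset H) ≠ {1} := by
  constructor
  · intro h hA
    apply h
    refine ⟨1, 1, ?_⟩
    apply Subtype.ext
    show (1 : Finset H) = (1 : Finset H) * (A : Finset H) * 1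
    rw [one_mul, mul_one, hA, Finset.singleton_one]
  · intro h hd
    have h1 := dvdTS_subset hd
    have h1' : (A : Finset H) ⊆ ({1} : Finset H) := by rwa [Finset.singleton_one]
    rcases Finset.subset_singleton_iff.mp h1' with h2 | h2
    · exact absurd (redPow.one_mem' A) (by rw [h2]; simp)
    · exact h h2

lemma proper_of_dvd_ne {A B : redPow H} (h : dvdTS A B) (hne : A ≠ B) : properDvdTS A B := by
  refine ⟨h, fun hd => hne ?_⟩
  exact Subtype.ext (Finset.Subset.antisymm (dvdTS_subset h) (dvdTS_subset hd))

lemma dvdTS_refl (A : redPow H) : dvdTS A A := ⟨1, 1, by simp⟩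

lemma exists_ne_one {A : redPow H} (h : (A : Finset H) ≠ {1}) :
    ∃ z ∈ (A : Finset H), z ≠ 1 := by
  by_contra hcon
  push_neg at hcon
  apply h
  apply Finset.Subset.antisymm
  · intro a ha; simp [hcon a ha]
  · intro a ha
    rw [Finset.mem_singleton.mp ha]; exact redPow.one_mem' A

/-- The key step for the case `X = X * Z`. -/
lemma key_left {X Z : redPow H} (hirr : isIrred X) (hZ : isNonUnitDivisor Z)
    (heq : X = X * Z) :
    ∃ x : H, x ≠ 1 ∧ (x ^ 2 = 1 ∨ x ^ 2 = x) ∧ (X : Finset H) = {1, x} := by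
  obtain ⟨z, hzZ, hz1⟩ := exists_ne_one (nonUnit_iff.mp hZ)
  have hXeq : (X : Finset H) = (X : Finset H) * (Z : Finset H) := congrArg Subtype.val heq
  have hsub : ({1, z} : Finset H) ⊆ (Z : Finset H) := by
    intro a ha
    rcases Finset.mem_insert.mp ha with h | h
    · rw [h]; exact redPow.one_mem' Z
    · rw [Finset.mem_singleton.mp h]; exact hzZ
  have hXmul : (X : Finset H) * {1, z} = (X : Finset H) := by
    apply Finset.Subset.antisymm
    · calc (X : Finset H) * {1, z} ⊆ (X : Finset H) * (Z : Finset H) :=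
            Finset.mul_subset_mul (Finset.Subset.refl _) hsub
        _ = (X : Finset H) := hXeq.symm
    · exact Finset.subset_mul_left _ (by simp)
  have hzX : z ∈ (X : Finset H) := by
    rw [hXeq]; exact Finset.subset_mul_right _ (redPow.one_mem' X) hzZ
  by_cases hbig : ∃ a ∈ (X : Finset H), a ≠ 1 ∧ a ≠ z
  · -- contradiction with irreducibility
    exfalso
    obtain ⟨a, haX, ha1, haz⟩ := hbig
    have h1z : (1 : H) ∈ (X : Finset H).erase z := Finset.mem_erase.mpr ⟨Ne.symm hz1, X.2⟩
    have h1z' : (1 : H) ∈ ({1, z} : Finset H) := Finset.mem_insert_self 1 {z}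
    set Y' : redPow H := ⟨(X : Finset H).erase z, h1z⟩ with hY'def
    set Z' : redPow H := ⟨({1, z} : Finset H), h1z'⟩ with hZ'def
    have hprod : X = Y' * Z' := by
      apply Subtype.ext
      show (X : Finset H) = (X : Finset H).erase z * {1, z}
      apply Finset.Subset.antisymm
      · intro b hb
        by_cases hbz : b = z
        · have : (1 : H) * z ∈ (X : Finset H).erase z * {1, z} :=
            Finset.mul_mem_mul h1z (by simp)
          simpa [hbz] using this
        · have : b * 1 ∈ (X : Finset H).erase z * {1, z} :=
            Finset.mul_mem_mul (Finset.mem_erase.mpr ⟨hbz, hb⟩) (by simp)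
          simpa using this
      · calc (X : Finset H).erase z * {1, z}
            ⊆ (X : Finset H) * {1, z} :=
              Finset.mul_subset_mul (Finset.erase_subset _ _) (Finset.Subset.refl _)
          _ = (X : Finset H) := hXmul
    have hY'nu : isNonUnitDivisor Y' := by
      rw [nonUnit_iff]
      intro hY1
      have ha' : a ∈ (Y' : Finset H) := Finset.mem_erase.mpr ⟨haz, haX⟩
      rw [hY1] at ha'
      exact ha1 (Finset.mem_singleton.mp ha')
    have hZ'nu : isNonUnitDivisor Z' := by
      rw [nonUnit_iff]
      intro hZ1
      have hz' : z ∈ (Z' : Finset H) := by simp [hZ'def]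
      rw [hZ1] at hz'
      exact hz1 (Finset.mem_singleton.mp hz')
    have hY'p : properDvdTS Y' X := by
      apply proper_of_dvd_ne ⟨1, Z', by rw [one_mul]; exact hprod⟩
      intro hYX
      have hz' : z ∉ (Y' : Finset H) := Finset.notMem_erase z _
      rw [hYX] at hz'
      exact hz' hzX
    have hZ'p : properDvdTS Z' X := by
      apply proper_of_dvd_ne ⟨Y', 1, by rw [mul_one]; exact hprod⟩
      intro hZX
      have ha' : a ∈ (Z' : Finset H) := by rw [hZX]; exact haX
      have ha'' : a ∈ ({1, z} : Finset H) := ha'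
      rcases Finset.mem_insert.mp ha'' with h | h
      · exact ha1 h
      · exact haz (Finset.mem_singleton.mp h)
    exact hirr.2 Y' Z' hY'nu hZ'nu hY'p hZ'p hprod
  · push_neg at hbig
    have hXset : (X : Finset H) = {1, z} := by
      apply Finset.Subset.antisymm
      · intro b hb
        rcases eq_or_ne b 1 with h | h
        · simp [h]
        · simp [hbig b hb h]
      · intro b hb
        rcases Finset.mem_insert.mp hb with h | h
        · rw [h]; exact redPow.one_mem' X
        · rw [Finset.mem_singleton.mp h]; exact hzX
    refine ⟨z, hz1, ?_, hXset⟩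
    have hzz : z * z ∈ (X : Finset H) * {1, z} := Finset.mul_mem_mul hzX (by simp)
    rw [hXmul, hXset] at hzz
    rw [pow_two]
    rcases Finset.mem_insert.mp hzz with h | h
    · exact Or.inl h
    · exact Or.inr (Finset.mem_singleton.mp h)

/-- The key step for the case `X = Y * X`. -/
lemma key_right {X Y : redPow H} (hirr : isIrred X) (hY : isNonUnitDivisor Y)
    (heq : X = Y * X) :
    ∃ x : H, x ≠ 1 ∧ (x ^ 2 = 1 ∨ x ^ 2 = x) ∧ (X : Finset H) = {1, x} := by
  obtain ⟨z, hzY, hz1⟩ := exists_ne_one (nonUnit_iff.mp hY)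
  have hXeq : (X : Finset H) = (Y : Finset H) * (X : Finset H) := congrArg Subtype.val heq
  have hsub : ({1, z} : Finset H) ⊆ (Y : Finset H) := by
    intro a ha
    rcases Finset.mem_insert.mp ha with h | h
    · rw [h]; exact redPow.one_mem' Y
    · rw [Finset.mem_singleton.mp h]; exact hzY
  have hXmul : ({1, z} : Finset H) * (X : Finset H) = (X : Finset H) := by
    apply Finset.Subset.antisymm
    · calc ({1, z} : Finset H) * (X : Finset H) ⊆ (Y : Finset H) * (X : Finset H) :=
            Finset.mul_subset_mul hsub (Finset.Subset.refl _)
        _ = (X : Finset H) := hXeq.symm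
    · exact Finset.subset_mul_right _ (by simp)
  have hzX : z ∈ (X : Finset H) := by
    rw [hXeq]; exact Finset.subset_mul_left _ (redPow.one_mem' X) hzY
  by_cases hbig : ∃ a ∈ (X : Finset H), a ≠ 1 ∧ a ≠ z
  · exfalso
    obtain ⟨a, haX, ha1, haz⟩ := hbig
    have h1z : (1 : H) ∈ (X : Finset H).erase z := Finset.mem_erase.mpr ⟨Ne.symm hz1, X.2⟩
    have h1z' : (1 : H) ∈ ({1, z} : Finset H) := Finset.mem_insert_self 1 {z}
    set Y' : redPow H := ⟨({1, z} : Finset H), h1z'⟩ with hY'def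
    set Z' : redPow H := ⟨(X : Finset H).erase z, h1z⟩ with hZ'def
    have hprod : X = Y' * Z' := by
      apply Subtype.ext
      show (X : Finset H) = ({1, z} : Finset H) * (X : Finset H).erase z
      apply Finset.Subset.antisymm
      · intro b hb
        by_cases hbz : b = z
        · have : z * (1 : H) ∈ ({1, z} : Finset H) * (X : Finset H).erase z :=
            Finset.mul_mem_mul (by simp) h1z
          simpa [hbz] using this
        · have : (1 : H) * b ∈ ({1, z} : Finset H) * (X : Finset H).erase z :=
            Finset.mul_mem_mul (by simp) (Finset.mem_erase.mpr ⟨hbz, hb⟩)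
          simpa using this
      · calc ({1, z} : Finset H) * (X : Finset H).erase z
            ⊆ ({1, z} : Finset H) * (X : Finset H) :=
              Finset.mul_subset_mul (Finset.Subset.refl _) (Finset.erase_subset _ _)
          _ = (X : Finset H) := hXmul
    have hY'nu : isNonUnitDivisor Y' := by
      rw [nonUnit_iff]
      intro hY1
      have hz' : z ∈ (Y' : Finset H) := by simp [hY'def]
      rw [hY1] at hz'
      exact hz1 (Finset.mem_singleton.mp hz')
    have hZ'nu : isNonUnitDivisor Z' := by
      rw [nonUnit_iff]
      intro hZ1
      have ha' : a ∈ (Z' : Finset H) := Finset.mem_erase.mpr ⟨haz, haX⟩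
      rw [hZ1] at ha'
      exact ha1 (Finset.mem_singleton.mp ha')
    have hY'p : properDvdTS Y' X := by
      apply proper_of_dvd_ne ⟨1, Z', by rw [one_mul]; exact hprod⟩
      intro hYX
      have ha' : a ∈ (Y' : Finset H) := by rw [hYX]; exact haX
      have ha'' : a ∈ ({1, z} : Finset H) := ha'
      rcases Finset.mem_insert.mp ha'' with h | h
      · exact ha1 h
      · exact haz (Finset.mem_singleton.mp h)
    have hZ'p : properDvdTS Z' X := by
      apply proper_of_dvd_ne ⟨Y', 1, by rw [mul_one]; exact hprod⟩
      intro hZX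
      have hz' : z ∉ (Z' : Finset H) := Finset.notMem_erase z _
      rw [hZX] at hz'
      exact hz' hzX
    exact hirr.2 Y' Z' hY'nu hZ'nu hY'p hZ'p hprod
  · push_neg at hbig
    have hXset : (X : Finset H) = {1, z} := by
      apply Finset.Subset.antisymm
      · intro b hb
        rcases eq_or_ne b 1 with h | h
        · simp [h]
        · simp [hbig b hb h]
      · intro b hb
        rcases Finset.mem_insert.mp hb with h | h
        · rw [h]; exact redPow.one_mem' X
        · rw [Finset.mem_singleton.mp h]; exact hzX
    refine ⟨z, hz1, ?_, hXset⟩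
    have hzz : z * z ∈ ({1, z} : Finset H) * (X : Finset H) :=
      Finset.mul_mem_mul (by simp) hzX
    rw [hXmul, hXset] at hzz
    rw [pow_two]
    rcases Finset.mem_insert.mp hzz with h | h
    · exact Or.inl h
    · exact Or.inr (Finset.mem_singleton.mp h)

end Aux
theorem stmt_4 {H : Type*} [Monoid H] [DecidableEq H] (X : redPow H) :
    (isIrred X ∧ ¬ isAtomTS X) ↔
      ∃ x : H, x ≠ 1 ∧ (x ^ 2 = 1 ∨ x ^ 2 = x) ∧ (X : Finset H) = {1, x} := by
  constructor
  · rintro ⟨hirr, hnatom⟩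
    have hnu : isNonUnitDivisor X := hirr.1
    rw [isAtomTS] at hnatom
    push_neg at hnatom
    obtain ⟨Y, Z, hYnu, hZnu, heq⟩ := hnatom hnu
    have hYsub : (Y : Finset H) ⊆ (X : Finset H) := by
      have : (X : Finset H) = (Y : Finset H) * (Z : Finset H) := congrArg Subtype.val heq
      rw [this]; exact Finset.subset_mul_left _ (redPow.one_mem' Z)
    have hZsub : (Z : Finset H) ⊆ (X : Finset H) := by
      have : (X : Finset H) = (Y : Finset H) * (Z : Finset H) := congrArg Subtype.val heq
      rw [this]; exact Finset.subset_mul_right _ (redPow.one_mem' Y)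
    have hYdvd : dvdTS Y X := ⟨1, Z, by rw [one_mul]; exact heq⟩
    have hZdvd : dvdTS Z X := ⟨Y, 1, by rw [mul_one]; exact heq⟩
    by_cases hXY : dvdTS X Y
    · have hYX : Y = X := Subtype.ext (Finset.Subset.antisymm hYsub (dvdTS_subset hXY))
      rw [hYX] at heq
      exact key_left hirr hZnu heq
    · by_cases hXZ : dvdTS X Z
      · have hZX : Z = X := Subtype.ext (Finset.Subset.antisymm hZsub (dvdTS_subset hXZ))
        rw [hZX] at heq
        exact key_right hirr hYnu heq
      · exact absurd heq (hirr.2 Y Z hYnu hZnu ⟨hYdvd, hXY⟩ ⟨hZdvd, hXZ⟩)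
  · rintro ⟨x, hx1, hx2, hXset⟩
    have hnu : isNonUnitDivisor X := by
      rw [nonUnit_iff, hXset]
      intro h
      have : x ∈ ({1} : Finset H) := h ▸ (by simp : x ∈ ({1, x} : Finset H))
      exact hx1 (Finset.mem_singleton.mp this)
    have hx2' : x * x = 1 ∨ x * x = x := by rwa [← pow_two]
    have hsq : X * X = X := by
      apply Subtype.ext
      show (X : Finset H) * (X : Finset H) = (X : Finset H)
      rw [hXset]
      apply Finset.Subset.antisymm
      · intro b hb
        rw [Finset.mem_mul] at hb
        obtain ⟨c, hc, d, hd, hcd⟩ := hb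
        rw [← hcd]
        simp only [Finset.mem_insert, Finset.mem_singleton] at hc hd
        rcases hc with h | h <;> rcases hd with h' | h' <;> subst h <;> subst h'
        · simp
        · simp
        · simp
        · rcases hx2' with h2 | h2 <;> rw [h2] <;> simp
      · exact Finset.subset_mul_left _ (by simp)
    refine ⟨⟨hnu, ?_⟩, ?_⟩
    · intro Y Z hYnu hZnu hYp hZp heq
      have hYsub : (Y : Finset H) ⊆ (X : Finset H) := dvdTS_subset hYp.1
      have hYX : Y = X := by
        apply Subtype.ext
        refine Finset.Subset.antisymm hYsub ?_
        rw [hXset]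
        intro b hb
        rcases Finset.mem_insert.mp hb with h | h
        · rw [h]; exact redPow.one_mem' Y
        · rw [Finset.mem_singleton.mp h]
          by_contra hxY
          have hY1 : (Y : Finset H) = {1} := by
            apply Finset.Subset.antisymm
            · intro c hc
              have hcX := hYsub hc
              rw [hXset] at hcX
              rcases Finset.mem_insert.mp hcX with h' | h'
              · simp [h']
              · exact absurd (Finset.mem_singleton.mp h' ▸ hc) hxY
            · intro c hc
              rw [Finset.mem_singleton.mp hc]; exact redPow.one_mem' Y
          exact nonUnit_iff.mp hYnu hY1
      exact hYp.2 (hYX ▸ dvdTS_refl Y)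
    · intro hatom
      exact hatom.2 X X hnu hnu hsq.symm
end

section
/- For every monoid H, the reduced finitary power monoid 𝒫fin,1(H) is FmF: every X ∈ 𝒫fin,1(H) with X ≠ {1_H} admits a minimal factorization into irreducibles, and each X has only finitely many minimal factorizations up to permutation. -/
open scoped Pointwise

/-!
Every member of `𝒫fin,1(H)` contains `1`, so a divisor of `X` is a subset of `X` and a proper
divisor is a proper subset. Splitting non-irreducibles therefore strictly lowers cardinality and
terminates, and a shortest factorization is minimal. In a minimal factorization `A₁ ⋯ Aₙ = X`
the prefix products are a strictly increasing chain of subsets of `X` (an equality would let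
one drop a factor), so `n < |X|`; as every factor is one of the finitely many subsets of `X`,
only finitely many multisets of factors occur.
-/

section Factorization

variable {M : Type*} [Monoid M]

lemma dvdTS_prod_of_mem {l : List M} {a : M} (h : a ∈ l) : dvdTS a l.prod := by
  obtain ⟨s, t, rfl⟩ := List.append_of_mem h
  exact ⟨s.prod, t.prod, by simp [mul_assoc]⟩

lemma IsFactorization.of_le {l l' : List M} {x : M} (h : IsFactorization l x)
    (hle : (↑l' : Multiset M) ≤ ↑l) (hprod : l'.prod = x) : IsFactorization l' x :=
  ⟨fun a ha => h.1 a (Multiset.mem_of_le hle (Multiset.mem_coe.2 ha)), hprod⟩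

lemma IsFactorization.exists_isMinimalFactorization {l : List M} {x : M}
    (h : IsFactorization l x) : ∃ l' : List M, IsMinimalFactorization l' x := by
  classical
  have hex : ∃ n, ∃ l : List M, l.length = n ∧ IsFactorization l x := ⟨_, l, rfl, h⟩
  obtain ⟨l₀, hlen, hl₀⟩ := Nat.find_spec hex
  refine ⟨l₀, hl₀, fun l' hlt hprod => ?_⟩
  have hshorter : l'.length < Nat.find hex := by
    simpa [hlen] using Multiset.card_lt_card hlt
  exact Nat.find_min hex hshorter ⟨l', rfl, hl₀.of_le hlt.le hprod⟩

lemma IsMinimalFactorization.prod_take_succ_ne {l : List M} {x : M}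
    (h : IsMinimalFactorization l x) {k : ℕ} (hk : k < l.length) :
    (l.take (k + 1)).prod ≠ (l.take k).prod := by
  intro heq
  refine h.2 (l.eraseIdx k) (lt_of_le_of_ne ?_ fun hcoe => ?_) ?_
  · exact Multiset.coe_le.2 (l.eraseIdx_sublist k).subperm
  · have := congrArg Multiset.card hcoe
    simp only [Multiset.coe_card, List.length_eraseIdx_of_lt hk] at this
    omega
  · rw [List.eraseIdx_eq_take_drop_succ, List.prod_append, ← heq,
      List.prod_take_mul_prod_drop, h.1.2]

end Factorization

lemma List.finite_setOf_forall_mem_length_le {α : Type*} {S : Set α} (hS : S.Finite)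
    (n : ℕ) : {l : List α | (∀ a ∈ l, a ∈ S) ∧ l.length ≤ n}.Finite := by
  have := hS.to_subtype
  refine ((List.finite_length_le S n).image (List.map Subtype.val)).subset ?_
  rintro l ⟨hmem, hlen⟩
  lift l to List S using hmem
  exact ⟨l, by simpa using hlen, rfl⟩

namespace redPow

variable {H : Type*} [Monoid H] [DecidableEq H]

lemma one_mem (A : redPow H) : (1 : H) ∈ (A : Finset H) := A.prop

lemma coe_subset_of_dvdTS {A X : redPow H} (h : dvdTS A X) :
    (A : Finset H) ⊆ (X : Finset H) := by
  obtain ⟨u, v, rfl⟩ := h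
  exact (Finset.subset_mul_right _ (one_mem u)).trans
    (Finset.subset_mul_left _ (one_mem v))

lemma isNonUnitDivisor_iff_ne_one {A : redPow H} : isNonUnitDivisor A ↔ A ≠ 1 := by
  refine ⟨fun h hA => h ⟨1, 1, by simp [hA]⟩, fun hA h => hA (Subtype.ext ?_)⟩
  refine (coe_subset_of_dvdTS h).antisymm ?_
  simpa using one_mem A

lemma coe_ssubset_of_properDvdTS {A X : redPow H} (h : properDvdTS A X) :
    (A : Finset H) ⊂ (X : Finset H) := by
  refine (coe_subset_of_dvdTS h.1).ssubset_of_ne fun hAX => h.2 ⟨1, 1, ?_⟩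
  simp [Subtype.ext hAX]

lemma exists_isFactorization {X : redPow H} (hX : X ≠ 1) :
    ∃ l : List (redPow H), IsFactorization l X := by
  induction hn : (X : Finset H).card using Nat.strong_induction_on generalizing X with
  | _ n ih =>
  by_cases hirr : isIrred X
  · exact ⟨[X], by simpa [IsFactorization] using hirr⟩
  obtain ⟨A, B, hA, hB, hAX, hBX, rfl⟩ : ∃ A B : redPow H, isNonUnitDivisor A ∧
      isNonUnitDivisor B ∧ properDvdTS A X ∧ properDvdTS B X ∧ X = A * B := by
    simpa [isIrred, isNonUnitDivisor_iff_ne_one.2 hX] using hirr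
  obtain ⟨la, hla⟩ := ih _ (hn ▸ Finset.card_lt_card (coe_ssubset_of_properDvdTS hAX))
    (isNonUnitDivisor_iff_ne_one.1 hA) rfl
  obtain ⟨lb, hlb⟩ := ih _ (hn ▸ Finset.card_lt_card (coe_ssubset_of_properDvdTS hBX))
    (isNonUnitDivisor_iff_ne_one.1 hB) rfl
  refine ⟨la ++ lb, fun a ha => ?_, by rw [List.prod_append, hla.2, hlb.2]⟩
  rcases List.mem_append.1 ha with h | h
  exacts [hla.1 a h, hlb.1 a h]

lemma length_lt_card_of_isMinimalFactorization {X : redPow H} {l : List (redPow H)}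
    (h : IsMinimalFactorization l X) : l.length < (X : Finset H).card := by
  have hchain : ∀ k ≤ l.length, k < (((l.take k).prod : redPow H) : Finset H).card := by
    intro k hk
    induction k with
    | zero => exact Finset.card_pos.2 ⟨1, one_mem _⟩
    | succ k ih =>
      have hsub : (((l.take k).prod : redPow H) : Finset H) ⊆
          ((l.take (k + 1)).prod : redPow H) := by
        rw [List.prod_take_succ l k hk]
        exact Finset.subset_mul_left _ (one_mem _)
      have hne := h.prod_take_succ_ne hk
      have := Finset.card_lt_card (hsub.ssubset_of_ne fun heq => hne (Subtype.ext heq).symm)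
      have := ih (by omega)
      omega
  simpa [h.1.2] using hchain l.length le_rfl

lemma finite_setOf_dvdTS (X : redPow H) : {A : redPow H | dvdTS A X}.Finite :=
  ((X : Finset H).powerset.finite_toSet.preimage Subtype.val_injective.injOn).subset
    fun _ hA => by simpa using coe_subset_of_dvdTS hA

end redPow

theorem stmt_7 {H : Type*} [Monoid H] [DecidableEq H] :
    (∀ X : redPow H, X ≠ 1 → ∃ l : List (redPow H), IsMinimalFactorization l X) ∧
    ∀ X : redPow H,
      {s : Multiset (redPow H) | ∃ l : List (redPow H),
        (↑l : Multiset (redPow H)) = s ∧ IsMinimalFactorization l X}.Finite := by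
  refine ⟨fun X hX => ?_, fun X => ?_⟩
  · obtain ⟨l, hl⟩ := redPow.exists_isFactorization hX
    exact hl.exists_isMinimalFactorization
  refine ((List.finite_setOf_forall_mem_length_le (redPow.finite_setOf_dvdTS X)
    (X : Finset H).card).image (↑)).subset ?_
  rintro _ ⟨l, rfl, hl⟩
  refine ⟨l, ⟨fun a ha => ?_, (redPow.length_lt_card_of_isMinimalFactorization hl).le⟩, rfl⟩
  exact hl.1.2 ▸ dvdTS_prod_of_mem ha
end

section
/- Let H be a monoid. (i) If 𝒫fin,1(H) is HmF, then every element of H has order at most 3, i.e. for every x ∈ H the submonoid generated by x has at most 3 elements. (ii) If 𝒫fin,1(H) is UmF, then every element of H has order at most 2; equivalently, for every x ∈ H either x² = 1_H or x² = x. -/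
open scoped Pointwise

/-- A half-factorial-with-respect-to-minimal-factorizations (HmF) monoid: every
non-identity element has a minimal factorization, and all minimal factorizations of a
given element have the same length. -/
def IsHmF (M : Type*) [Monoid M] : Prop :=
  (∀ x : M, x ≠ 1 → ∃ l : List M, IsMinimalFactorization l x) ∧
    ∀ x : M, ∀ l l' : List M,
      IsMinimalFactorization l x → IsMinimalFactorization l' x → l.length = l'.length

/-! ### Auxiliary lemmas -/

section AuxGeneral

variable {M : Type*} [Monoid M]

set_option linter.unusedSectionVars false

lemma rp_mem_of_lt_mul {l' l : List M} (h : (↑l' : Multiset M) < ↑l) {c : M}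
    (hc : c ∈ l') : c ∈ l := by
  have := Multiset.mem_of_le h.le (show c ∈ (↑l' : Multiset M) by exact_mod_cast hc)
  exact_mod_cast this

lemma rp_min_fac_two {A B X : M} (hA : isIrred A) (hB : isIrred B) (hprod : A * B = X)
    (h1 : (1:M) ≠ X) (hAX : A ≠ X) (hBX : B ≠ X) :
    IsMinimalFactorization [A, B] X := by
  refine ⟨⟨by intro c hc; simp at hc; rcases hc with rfl|rfl; exacts [hA, hB],
    by simpa using hprod⟩, ?_⟩
  intro l' hlt
  have hcard : l'.length < 2 := by simpa using Multiset.card_lt_card hlt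
  match l', hcard with
  | [], _ => simpa using h1
  | [c], _ =>
      have hc : c ∈ [A, B] := rp_mem_of_lt_mul hlt (by simp)
      simp only [List.mem_cons, List.mem_singleton, List.not_mem_nil, or_false] at hc
      simp only [List.prod_cons, List.prod_nil, mul_one]
      rcases hc with rfl|rfl
      exacts [hAX, hBX]

lemma rp_min_fac_three {A X : M} (hA : isIrred A) (hprod : A * A * A = X)
    (h1 : (1:M) ≠ X) (hAX : A ≠ X) (hAAX : A * A ≠ X) :
    IsMinimalFactorization [A, A, A] X := by
  refine ⟨⟨by intro c hc; simp at hc; subst hc; exact hA,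
    by simpa [mul_assoc] using hprod⟩, ?_⟩
  intro l' hlt
  have hcard : l'.length < 3 := by simpa using Multiset.card_lt_card hlt
  match l', hcard with
  | [], _ => simpa using h1
  | [c], _ =>
      have hc : c ∈ [A, A, A] := rp_mem_of_lt_mul hlt (by simp)
      simp only [List.mem_cons, List.not_mem_nil, or_false, or_self] at hc
      subst hc
      simpa using hAX
  | [c, d], _ =>
      have hc : c ∈ [A, A, A] := rp_mem_of_lt_mul hlt (by simp)
      have hd : d ∈ [A, A, A] := rp_mem_of_lt_mul hlt (by simp)
      simp only [List.mem_cons, List.not_mem_nil, or_false, or_self] at hc hd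
      subst hc; subst hd
      simpa using hAAX

end AuxGeneral

section AuxRP

variable {H : Type*} [Monoid H] [DecidableEq H]

lemma rp_powers_small {x : H} (m j : ℕ) (hj : j < m) (h : x ^ m = x ^ j) :
    (Submonoid.powers x : Set H).Finite ∧ (Submonoid.powers x : Set H).ncard ≤ m := by
  have key : ∀ n, ∃ k, k < m ∧ x ^ n = x ^ k := by
    intro n; induction n with
    | zero => exact ⟨0, by omega, rfl⟩
    | succ n ih =>
        obtain ⟨k, hk, hxk⟩ := ih
        by_cases hk1 : k + 1 < m
        · exact ⟨k+1, hk1, by rw [pow_succ, hxk, pow_succ]⟩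
        · have hkm : k + 1 = m := by omega
          exact ⟨j, hj, by rw [pow_succ, hxk, ← pow_succ, hkm, h]⟩
  have hsub : (Submonoid.powers x : Set H) ⊆ ↑((Finset.range m).image (x ^ ·)) := by
    rintro y hy
    obtain ⟨n, rfl⟩ := hy
    obtain ⟨k, hk, hxk⟩ := key n
    simp only [Finset.coe_image, Finset.coe_range, Set.mem_image, Set.mem_Iio]
    exact ⟨k, hk, hxk.symm⟩
  refine ⟨Set.Finite.subset (Finset.finite_toSet _) hsub, ?_⟩
  calc (Submonoid.powers x : Set H).ncard ≤ _ :=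
        Set.ncard_le_ncard hsub (Finset.finite_toSet _)
    _ = _ := Set.ncard_coe_finset _
    _ ≤ m := le_trans Finset.card_image_le (by simp)

lemma rp_mem_redPow {X : Finset H} : X ∈ redPow H ↔ (1:H) ∈ X := Iff.rfl

/-- The two-element set `{1, a}` as an element of the reduced power monoid. -/
def pairP (a : H) : redPow H := ⟨{1,a}, rp_mem_redPow.mpr (by simp)⟩

lemma rp_coe_one : ((1 : redPow H) : Finset H) = {1} := rfl

lemma rp_dvd_subset {A B : redPow H} (h : dvdTS A B) : (A:Finset H) ⊆ (B:Finset H) := by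
  obtain ⟨u, v, rfl⟩ := h
  intro t ht
  have : (1:H) * t * 1 ∈ (u:Finset H) * (A:Finset H) * (v:Finset H) :=
    Finset.mul_mem_mul (Finset.mul_mem_mul u.2 ht) v.2
  simpa using this

lemma rp_nonunit_iff {A : redPow H} : isNonUnitDivisor A ↔ A ≠ 1 := by
  constructor
  · rintro h rfl; exact h ⟨1, 1, by simp⟩
  · intro hA hdvd
    apply hA
    apply Subtype.ext
    apply Finset.Subset.antisymm
    · exact rp_dvd_subset hdvd
    · intro t ht
      rw [rp_coe_one, Finset.mem_singleton] at ht
      subst ht; exact A.2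

lemma rp_pair_irred {a : H} (ha : a ≠ 1) : isIrred (pairP a) := by
  have hne : pairP a ≠ 1 := by
    intro h
    have h2 : a ∈ ((1:redPow H) : Finset H) := by
      rw [← h]; simp [pairP]
    rw [rp_coe_one, Finset.mem_singleton] at h2
    exact ha h2
  refine ⟨rp_nonunit_iff.mpr hne, ?_⟩
  intro Y Z hY hZ hYp hZp hEq
  apply hYp.2
  have hsub := rp_dvd_subset hYp.1
  have hYne : (Y:Finset H) ≠ {1} := by
    intro h
    exact rp_nonunit_iff.mp hY (Subtype.ext (h.trans rp_coe_one.symm))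
  have haY : a ∈ (Y:Finset H) := by
    by_contra haY
    apply hYne
    apply Finset.Subset.antisymm
    · intro t ht
      have h2 := hsub ht
      simp [pairP] at h2
      rcases h2 with rfl|rfl
      · simp
      · exact absurd ht haY
    · intro t ht
      simp at ht; subst ht; exact Y.2
  have hYeq : Y = pairP a := by
    apply Subtype.ext
    apply Finset.Subset.antisymm hsub
    intro t ht; simp [pairP] at ht; rcases ht with rfl|rfl; exacts [Y.2, haY]
  exact ⟨1, 1, by simp [hYeq]⟩

lemma rp_pair_mul_pair (a b : H) : ({1,a} : Finset H) * {1,b} = {1,a,b,a*b} := by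
  ext t; simp [Finset.mem_mul]; aesop

lemma rp_tri_mul_pair (x y z : H) :
    ({1,x,y} : Finset H) * {1,z} = {1,x,y,z,x*z,y*z} := by
  ext t; simp [Finset.mem_mul]; aesop

lemma rp_pp_val (x : H) : ((pairP x * pairP x : redPow H) : Finset H) = {1, x, x*x} := by
  show ({1,x} : Finset H) * {1,x} = _
  rw [rp_pair_mul_pair]; ext t; simp

lemma rp_ppp_val (x : H) :
    ((pairP x * pairP x * pairP x : redPow H) : Finset H) = {1, x, x*x, x*x*x} := by
  show ((pairP x * pairP x : redPow H) : Finset H) * ({1,x} : Finset H) = _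
  rw [rp_pp_val, rp_tri_mul_pair]; ext t; simp

lemma rp_pq_val (x : H) :
    ((pairP x * pairP (x*x) : redPow H) : Finset H) = {1, x, x*x, x*x*x} := by
  show ({1,x} : Finset H) * {1,x*x} = _
  rw [rp_pair_mul_pair, ← mul_assoc]

lemma rp_pq_val' (x : H) (h : x*x*x = 1 ∨ x*x*x = x ∨ x*x*x = x*x) :
    ((pairP x * pairP (x*x) : redPow H) : Finset H) = {1, x, x*x} := by
  rw [rp_pq_val]
  rcases h with h|h|h <;> rw [h] <;> (ext t; simp; try tauto)

lemma rp_ne_of_mem_not_mem {A B : redPow H} {w : H} (hw : w ∈ (B:Finset H))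
    (hw' : w ∉ (A:Finset H)) : A ≠ B := by
  intro e; rw [e] at hw'; exact hw' hw

lemma rp_not_HmF_aux {x : H} (h1 : x ≠ 1) (h2 : x*x ≠ 1) (h3 : x*x ≠ x)
    (h4 : x*x*x ≠ 1) (h5 : x*x*x ≠ x) (h6 : x*x*x ≠ x*x) :
    ∃ X : redPow H, IsMinimalFactorization [pairP x, pairP x, pairP x] X ∧
      IsMinimalFactorization [pairP x, pairP (x*x)] X := by
  refine ⟨pairP x * pairP x * pairP x, ?_, ?_⟩
  · refine rp_min_fac_three (rp_pair_irred h1) rfl ?_ ?_ ?_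
    · exact rp_ne_of_mem_not_mem (w := x) (by rw [rp_ppp_val]; simp)
        (by rw [rp_coe_one]; simpa using h1)
    · exact rp_ne_of_mem_not_mem (w := x*x) (by rw [rp_ppp_val]; simp)
        (by simp [pairP]; exact ⟨h2, h3⟩)
    · exact rp_ne_of_mem_not_mem (w := x*x*x) (by rw [rp_ppp_val]; simp)
        (by rw [rp_pp_val]; simp; exact ⟨h4, h5, h6⟩)
  · refine rp_min_fac_two (rp_pair_irred h1) (rp_pair_irred h2)
      (Subtype.ext (by rw [rp_pq_val, rp_ppp_val])) ?_ ?_ ?_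
    · exact rp_ne_of_mem_not_mem (w := x) (by rw [rp_ppp_val]; simp)
        (by rw [rp_coe_one]; simpa using h1)
    · exact rp_ne_of_mem_not_mem (w := x*x) (by rw [rp_ppp_val]; simp)
        (by simp [pairP]; exact ⟨h2, h3⟩)
    · refine rp_ne_of_mem_not_mem (w := x) (by rw [rp_ppp_val]; simp) ?_
      simp [pairP]
      exact ⟨h1, fun e => h3 e.symm⟩

lemma rp_not_UmF_aux {x : H} (h1 : x ≠ 1) (h2 : x*x ≠ 1) (h3 : x*x ≠ x)
    (hc : x*x*x = 1 ∨ x*x*x = x ∨ x*x*x = x*x) :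
    ∃ X : redPow H, IsMinimalFactorization [pairP x, pairP x] X ∧
      IsMinimalFactorization [pairP x, pairP (x*x)] X := by
  refine ⟨pairP x * pairP x, ?_, ?_⟩
  · refine rp_min_fac_two (rp_pair_irred h1) (rp_pair_irred h1) rfl ?_ ?_ ?_
    · exact rp_ne_of_mem_not_mem (w := x) (by rw [rp_pp_val]; simp)
        (by rw [rp_coe_one]; simpa using h1)
    · exact rp_ne_of_mem_not_mem (w := x*x) (by rw [rp_pp_val]; simp)
        (by simp [pairP]; exact ⟨h2, h3⟩)
    · exact rp_ne_of_mem_not_mem (w := x*x) (by rw [rp_pp_val]; simp)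
        (by simp [pairP]; exact ⟨h2, h3⟩)
  · refine rp_min_fac_two (rp_pair_irred h1) (rp_pair_irred h2)
      (Subtype.ext (by rw [rp_pq_val' x hc, rp_pp_val])) ?_ ?_ ?_
    · exact rp_ne_of_mem_not_mem (w := x) (by rw [rp_pp_val]; simp)
        (by rw [rp_coe_one]; simpa using h1)
    · exact rp_ne_of_mem_not_mem (w := x*x) (by rw [rp_pp_val]; simp)
        (by simp [pairP]; exact ⟨h2, h3⟩)
    · refine rp_ne_of_mem_not_mem (w := x) (by rw [rp_pp_val]; simp) ?_
      simp [pairP]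
      exact ⟨h1, fun e => h3 e.symm⟩

end AuxRP

theorem stmt_8 {H : Type*} [Monoid H] [DecidableEq H] :
    (IsHmF (redPow H) → ∀ x : H,
      (Submonoid.powers x : Set H).Finite ∧ (Submonoid.powers x : Set H).ncard ≤ 3) ∧
    (IsUmF (redPow H) → ∀ x : H,
      ((Submonoid.powers x : Set H).Finite ∧ (Submonoid.powers x : Set H).ncard ≤ 2) ∧
        (x ^ 2 = 1 ∨ x ^ 2 = x)) := by
  constructor
  · intro hH x
    by_cases e1 : x = 1
    · obtain ⟨hf, hle⟩ := rp_powers_small (x := x) 1 0 (by omega)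
        (by rw [pow_one, pow_zero]; exact e1)
      exact ⟨hf, hle.trans (by omega)⟩
    by_cases e2 : x*x = 1
    · obtain ⟨hf, hle⟩ := rp_powers_small (x := x) 2 0 (by omega)
        (by rw [pow_two, pow_zero]; exact e2)
      exact ⟨hf, hle.trans (by omega)⟩
    by_cases e3 : x*x = x
    · obtain ⟨hf, hle⟩ := rp_powers_small (x := x) 2 1 (by omega)
        (by rw [pow_two, pow_one]; exact e3)
      exact ⟨hf, hle.trans (by omega)⟩
    by_cases e4 : x*x*x = 1
    · exact rp_powers_small 3 0 (by omega)
        (by rw [show (3:ℕ) = 2 + 1 from rfl, pow_succ, pow_two, pow_zero]; exact e4)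
    by_cases e5 : x*x*x = x
    · exact rp_powers_small 3 1 (by omega)
        (by rw [show (3:ℕ) = 2 + 1 from rfl, pow_succ, pow_two, pow_one]; exact e5)
    by_cases e6 : x*x*x = x*x
    · exact rp_powers_small 3 2 (by omega)
        (by rw [show (3:ℕ) = 2 + 1 from rfl, pow_succ, pow_two]; exact e6)
    exfalso
    obtain ⟨X, m1, m2⟩ := rp_not_HmF_aux e1 e2 e3 e4 e5 e6
    have := hH.2 X _ _ m1 m2
    simp at this
  · intro hU x
    have key : x*x = 1 ∨ x*x = x := by
      by_contra hk
      push_neg at hk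
      obtain ⟨h2, h3⟩ := hk
      have h1 : x ≠ 1 := by rintro rfl; exact h2 (by simp)
      by_cases hc : x*x*x = 1 ∨ x*x*x = x ∨ x*x*x = x*x
      · obtain ⟨X, m1, m2⟩ := rp_not_UmF_aux h1 h2 h3 hc
        have hperm := hU.2 X _ _ m1 m2
        have hmem : pairP (x*x) ∈ [pairP x, pairP x] := hperm.mem_iff.mpr (by simp)
        simp only [List.mem_cons, List.not_mem_nil, or_false, or_self] at hmem
        have hval : ((pairP (x*x) : redPow H) : Finset H) = ((pairP x : redPow H) : Finset H) := by
          rw [hmem]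
        have hx : x*x ∈ ({1,x} : Finset H) := by
          rw [show ({1,x} : Finset H) = ((pairP x : redPow H) : Finset H) from rfl, ← hval]
          simp [pairP]
        simp at hx
        tauto
      · push_neg at hc
        obtain ⟨h4, h5, h6⟩ := hc
        obtain ⟨X, m1, m2⟩ := rp_not_HmF_aux h1 h2 h3 h4 h5 h6
        have := (hU.2 X _ _ m1 m2).length_eq
        simp at this
    refine ⟨?_, ?_⟩
    · rcases key with k | k
      · exact rp_powers_small 2 0 (by omega) (by rw [pow_two, pow_zero]; exact k)
      · exact rp_powers_small 2 1 (by omega) (by rw [pow_two, pow_one]; exact k)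
    · rw [pow_two]; exact key
end

section
/- Let H be an almost-breakable monoid. Then every element of 𝒫fin,1(H) admits a square-free factorization into irreducibles, i.e. a factorization whose factors are pairwise distinct (the empty factorization for {1_H}). -/
open scoped Pointwise

/-!
Write `X = {1} ∪ S`. If `S` is listed as `x₁, …, xₙ` with `xᵢ * xⱼ ∈ {xᵢ, xⱼ}` for `i < j`, then
every ordered subproduct of the `xᵢ` is one of its factors, so `{1, x₁} ⋯ {1, xₙ} = X`; and each
`{1, x}` with `x ≠ 1` is irreducible, its only divisors in `𝒫fin,1(H)` being `{1}` and itself.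
Such a listing is built by induction: say `x` absorbs `s` if `x * s = x` or `s * x = x`. In an
almost-breakable semigroup this is a total preorder, so `S` has an element `x` absorbing all of
`S`, and almost-breakability then forces `x` to be placeable either in front of or behind all
other elements of `S`.
-/

def IsAlmostBreakable (M : Type*) [Mul M] : Prop :=
  ∀ x y : M, (x * y = x ∨ x * y = y) ∨ (y * x = x ∨ y * x = y)

def MulAbsorbs {M : Type*} [Mul M] (x y : M) : Prop := x * y = x ∨ y * x = x

namespace IsAlmostBreakable

variable {M : Type*} [Semigroup M] (hM : IsAlmostBreakable M)
include hM

theorem mul_self (x : M) : x * x = x := by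
  have := hM x x; tauto

theorem mulAbsorbs_self (x : M) : MulAbsorbs x x := .inl (hM.mul_self x)

theorem mulAbsorbs_total (x y : M) : MulAbsorbs x y ∨ MulAbsorbs y x := by
  unfold MulAbsorbs; have := hM x y; tauto

theorem mulAbsorbs_trans {x y z : M} (hxy : MulAbsorbs x y) (hyz : MulAbsorbs y z) :
    MulAbsorbs x z := by
  unfold MulAbsorbs at *
  rcases hxy with hxy | hxy <;> rcases hyz with hyz | hyz
  · exact .inl (by rw [← hxy, mul_assoc, hyz])
  -- In the mixed cases, unless `hM x z` already gives the claim, two of `x, y, z` coincide.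
  · rcases hM x z with (h | h) | (h | h) <;> grind [mul_assoc z x y]
  · rcases hM x z with (h | h) | (h | h) <;> grind
  · exact .inr (by rw [← hxy, ← mul_assoc, hyz])

theorem exists_mulAbsorbs_forall {S : Finset M} (hS : S.Nonempty) :
    ∃ x ∈ S, ∀ s ∈ S, MulAbsorbs x s := by
  classical
  induction S using Finset.induction_on with
  | empty => exact absurd hS Finset.not_nonempty_empty
  | @insert a S _ ih =>
    rcases S.eq_empty_or_nonempty with rfl | hS
    · exact ⟨a, by simp, by simpa using hM.mulAbsorbs_self a⟩
    obtain ⟨x, hxS, hx⟩ := ih hS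
    rcases hM.mulAbsorbs_total x a with hxa | hax
    · exact ⟨x, Finset.mem_insert_of_mem hxS, by simpa [hxa] using hx⟩
    · refine ⟨a, Finset.mem_insert_self a S, ?_⟩
      simpa [hM.mulAbsorbs_self a] using fun s hs => hM.mulAbsorbs_trans hax (hx s hs)

theorem forall_mul_mem_pair_of_mulAbsorbs_forall {S : Finset M} {x : M}
    (hx : ∀ s ∈ S, MulAbsorbs x s) :
    (∀ s ∈ S, s * x = s ∨ s * x = x) ∨ (∀ s ∈ S, x * s = x ∨ x * s = s) := by
  by_contra hc
  push Not at hc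
  obtain ⟨⟨a, ha, hax, hax'⟩, ⟨b, hb, hxb, hxb'⟩⟩ := hc
  have hxa : x * a = x := (hx a ha).resolve_right hax'
  have hbx : b * x = x := (hx b hb).resolve_left hxb
  rcases hM a b with (h | h) | (h | h)
  · exact hxb (by rw [← hxa, mul_assoc, h])
  · exact hax' (by rw [← hbx, ← mul_assoc, h])
  -- `(x * b) * a = x` resp. `b * (a * x) = x`: compare `a` with `x * b` resp. `a * x` with `b`.
  · rcases hM a (x * b) with (h' | h') | (h' | h') <;> grind [hM.mul_self a]
  · rcases hM (a * x) b with (h' | h') | (h' | h') <;> grind [hM.mul_self b]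

theorem exists_nodup_pairwise [DecidableEq M] (S : Finset M) :
    ∃ l : List M, l.Nodup ∧ l.toFinset = S ∧ l.Pairwise (fun a b => a * b = a ∨ a * b = b) := by
  induction S using Finset.strongInduction with
  | H S ih =>
    rcases S.eq_empty_or_nonempty with rfl | hS
    · exact ⟨[], List.nodup_nil, rfl, List.Pairwise.nil⟩
    obtain ⟨x, hxS, hx⟩ := hM.exists_mulAbsorbs_forall hS
    obtain ⟨l, hnd, hl, hpw⟩ := ih (S.erase x) (Finset.erase_ssubset hxS)
    have hlS : ∀ a ∈ l, a ∈ S := fun a ha =>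
      Finset.mem_of_mem_erase (hl ▸ List.mem_toFinset.mpr ha)
    have hxl : (x :: l).Nodup := List.nodup_cons.mpr ⟨by simp [← List.mem_toFinset, hl], hnd⟩
    have hS : insert x (S.erase x) = S := Finset.insert_erase hxS
    rcases hM.forall_mul_mem_pair_of_mulAbsorbs_forall hx with hright | hleft
    · refine ⟨l ++ [x], (List.perm_append_singleton x l).nodup_iff.mpr hxl, by simp [hl, hS], ?_⟩
      simp only [List.pairwise_append, hpw, List.pairwise_singleton, List.mem_singleton, true_and]
      rintro a ha b rfl
      exact hright a (hlS a ha)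
    · exact ⟨x :: l, hxl, by simp [hl, hS],
        List.pairwise_cons.mpr ⟨fun a ha => hleft a (hlS a ha), hpw⟩⟩

end IsAlmostBreakable

section PairProduct

variable {M : Type*} [Monoid M] [DecidableEq M]

theorem pair_mul_insert_one {x : M} {S : Finset M} (hx : ∀ s ∈ S, x * s = x ∨ x * s = s) :
    ({1, x} : Finset M) * insert 1 S = insert 1 (insert x S) := by
  ext a
  simp only [Finset.mem_mul, Finset.mem_insert, Finset.mem_singleton]
  constructor
  · rintro ⟨b, rfl | rfl, c, rfl | hc, rfl⟩ <;> grind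
  · rintro (rfl | rfl | ha)
    exacts [⟨1, .inl rfl, 1, .inl rfl, one_mul 1⟩, ⟨a, .inr rfl, 1, .inl rfl, mul_one a⟩,
      ⟨1, .inl rfl, a, .inr ha, one_mul a⟩]

theorem prod_map_pair_eq_insert_one {l : List M}
    (hl : l.Pairwise (fun a b => a * b = a ∨ a * b = b)) :
    (l.map fun a => ({1, a} : Finset M)).prod = insert 1 l.toFinset := by
  induction hl with
  | nil => rfl
  | @cons a l ha _ ih =>
    rw [List.map_cons, List.prod_cons, ih, pair_mul_insert_one fun s hs => ha s (by simpa using hs)]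
    simp

end PairProduct

theorem dvdTS_refl_s15 {M : Type*} [Monoid M] (a : M) : dvdTS a a := ⟨1, 1, by simp⟩

namespace redPow

variable {H : Type*} [Monoid H] [DecidableEq H]

def pair (x : H) : redPow H := ⟨{1, x}, Finset.mem_insert_self 1 {x}⟩

theorem subset_of_dvdTS {A B : redPow H} (h : dvdTS A B) : (A : Finset H) ⊆ B := by
  obtain ⟨u, v, rfl⟩ := h
  intro a ha
  simpa using Finset.mul_mem_mul (Finset.mul_mem_mul u.2 ha) v.2

theorem isIrred_pair {x : H} (hx : x ≠ 1) : isIrred (pair x) := by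
  refine ⟨fun h => hx ?_, fun Y _ hY _ ⟨hYx, hxY⟩ _ _ => ?_⟩
  · simpa [pair] using subset_of_dvdTS h (Finset.mem_insert_of_mem (Finset.mem_singleton_self x))
  have hsub : (Y : Finset H) ⊆ {1, x} := subset_of_dvdTS hYx
  by_cases hxY' : x ∈ (Y : Finset H)
  · have hY_eq : Y = pair x :=
      Subtype.ext (hsub.antisymm (Finset.insert_subset Y.2 (Finset.singleton_subset_iff.mpr hxY')))
    exact hxY (hY_eq ▸ dvdTS_refl_s15 Y)
  · have hY_eq : Y = 1 := Subtype.ext (Finset.eq_singleton_iff_unique_mem.mpr ⟨Y.2, fun a ha => by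
      rcases Finset.mem_insert.mp (hsub ha) with h | h
      · exact h
      · exact absurd (Finset.mem_singleton.mp h ▸ ha) hxY'⟩)
    exact hY (by rw [hY_eq]; exact dvdTS_refl_s15 1)

theorem pair_injective : Function.Injective (pair (H := H)) := by
  intro x y h
  have h' : ({1, x} : Set H) = {1, y} := by
    rw [← Finset.coe_pair, ← Finset.coe_pair]
    exact congrArg (fun X : redPow H => ((X : Finset H) : Set H)) h
  rcases Set.pair_eq_pair_iff.mp h' with ⟨-, h⟩ | ⟨h₁, h₂⟩
  exacts [h, h₂.trans h₁]

theorem coe_prod_map_pair (l : List H) :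
    ((l.map pair).prod : Finset H) = (l.map fun a => ({1, a} : Finset H)).prod := by
  rw [Submonoid.coe_list_prod, List.map_map]
  rfl

end redPow

theorem stmt_15 {H : Type*} [Monoid H] [DecidableEq H]
    (hab : ∀ x y : H, (x * y = x ∨ x * y = y) ∨ (y * x = x ∨ y * x = y))
    (X : redPow H) :
    ∃ l : List (redPow H), IsFactorization l X ∧ l.Nodup := by
  obtain ⟨l, hnd, hl, hpw⟩ := IsAlmostBreakable.exists_nodup_pairwise hab ((X : Finset H).erase 1)
  refine ⟨l.map redPow.pair, ⟨?_, ?_⟩, hnd.map redPow.pair_injective⟩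
  · simp only [List.forall_mem_map]
    intro a ha
    exact redPow.isIrred_pair (Finset.ne_of_mem_erase (hl ▸ List.mem_toFinset.mpr ha))
  · apply Subtype.ext
    rw [redPow.coe_prod_map_pair, prod_map_pair_eq_insert_one hpw, hl, Finset.insert_erase X.2]
end
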